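/- arXiv:1404.1424 — 6 statements merged into one kernel-verified Lean document; each statement's English description precedes it below -/
import Mathlib

section
/- Let (V,E,c) be a connected electrical network with conductance function c. For every pair of vertices x, y ∈ V there exists a unique vector v_{xy} in the energy Hilbert space H_E such that ⟨v_{xy}, u⟩_{H_E} = u(x) − u(y) for all u ∈ H_E. -/
open scoped InnerProductSpace ComplexConjugate

/-- A connected electrical network: a countable locally finite connected graph
with a symmetric conductance function `c` that is positive on edges. -/
structure Network (V : Type*) where
  adj : V → V → Prop
  symm : ∀ x y, adj x y → adj y x
  loopless : ∀ x, ¬ adj x x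
  locFin : ∀ x, {y | adj x y}.Finite
  degPos : ∀ x, ∃ y, adj x y
  conn : ∀ x y, Relation.ReflTransGen (fun a b => adj a b) x y
  c : V → V → ℝ
  c_symm : ∀ x y, c x y = c y x
  c_pos : ∀ x y, adj x y → 0 < c x y

namespace Network

variable {V : Type*} (N : Network V)

attribute [local instance] Classical.propDecidable

/-- The (finite) set of neighbors of a vertex. -/
noncomputable def nbrs (x : V) : Finset V := (N.locFin x).toFinset

/-- The energy inner product `⟨u,v⟩ = (1/2) ΣΣ c_{xy} (ū(x)-ū(y))(v(x)-v(y))`. -/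
noncomputable def energyInner (u v : V → ℂ) : ℂ :=
  (1 / 2) * ∑' p : V × V,
    if N.adj p.1 p.2 then (N.c p.1 p.2 : ℂ) * (conj (u p.1 - u p.2)) * (v p.1 - v p.2) else 0

/-- The energy `‖u‖²_{H_E} = (1/2) ΣΣ c_{xy} |u(x)-u(y)|²`. -/
noncomputable def energy (u : V → ℂ) : ℝ :=
  (1 / 2) * ∑' p : V × V,
    if N.adj p.1 p.2 then N.c p.1 p.2 * ‖u p.1 - u p.2‖ ^ 2 else 0

/-- `u` has finite energy (the energy sum converges). -/
def energySummable (u : V → ℂ) : Prop :=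
  Summable (fun p : V × V => if N.adj p.1 p.2 then N.c p.1 p.2 * ‖u p.1 - u p.2‖ ^ 2 else 0)

/-- The graph Laplacian `(Δu)(x) = Σ_{y∼x} c_{xy} (u(x) - u(y))`. -/
noncomputable def lap (u : V → ℂ) (x : V) : ℂ :=
  ∑ y ∈ N.nbrs x, (N.c x y : ℂ) * (u x - u y)

/-- The total conductance `c(x) = Σ_{y∼x} c_{xy}` at a vertex. -/
noncomputable def cbar (x : V) : ℝ := ∑ y ∈ N.nbrs x, N.c x y

/-- The transition operator `(Pu)(x) = Σ_{y∼x} (c_{xy}/c(x)) u(y)`. -/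
noncomputable def trans (u : V → ℂ) (x : V) : ℂ :=
  ∑ y ∈ N.nbrs x, ((N.c x y / N.cbar x : ℝ) : ℂ) * u y

/-- The weighted `ℓ²(V, c̃)` inner product `Σ_x c̃(x) ū₁(x) u₂(x)`. -/
noncomputable def wInner (u₁ u₂ : V → ℂ) : ℂ :=
  ∑' x : V, (N.cbar x : ℂ) * (conj (u₁ x)) * u₂ x

end Network

/-- A realization of the energy Hilbert space `H_E` of a network: a complete complex
inner product space `H` whose elements represent functions on `V` (modulo constants,
via `rep`), whose inner product is the energy form, and which contains (a class of)
every finite-energy function on `V`. -/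
structure EnergySpace {V : Type*} (N : Network V) (H : Type*)
    [NormedAddCommGroup H] [InnerProductSpace ℂ H] [CompleteSpace H] where
  rep : H → V → ℂ
  inner_eq : ∀ f g : H, ⟪f, g⟫_ℂ = N.energyInner (rep f) (rep g)
  surj : ∀ u : V → ℂ, N.energySummable u →
    ∃ f : H, ∀ a b : V, rep f a - rep f b = u a - u b

attribute [local instance] Classical.propDecidable

/-! `rep` is not assumed linear, but `f ↦ grad (rep f)` preserves inner products from `H` into
`ℓ²(V × V)`, and an inner-product-preserving map is automatically a linear isometry. Hence each edge
difference `rep f a - rep f b`, a rescaled coordinate of that isometry, is a bounded linear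
functional on `H`; along a path from `x` to `y` so is `rep f x - rep f y`. The dipole `v_{xy}` is
its Riesz representative, unique because the inner product is nondegenerate. -/

section InnerPreserving

variable {𝕜 E F : Type*} [RCLike 𝕜] [NormedAddCommGroup E] [InnerProductSpace 𝕜 E]
  [NormedAddCommGroup F] [InnerProductSpace 𝕜 F] {T : E → F}

theorem map_add_of_inner_map_map (hT : ∀ x y, ⟪T x, T y⟫_𝕜 = ⟪x, y⟫_𝕜) (x y : E) :
    T (x + y) = T x + T y := by
  rw [← sub_eq_zero, ← inner_self_eq_zero (𝕜 := 𝕜)]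
  simp only [inner_sub_left, inner_sub_right, inner_add_left, inner_add_right, hT]
  ring

theorem map_smul_of_inner_map_map (hT : ∀ x y, ⟪T x, T y⟫_𝕜 = ⟪x, y⟫_𝕜) (c : 𝕜) (x : E) :
    T (c • x) = c • T x := by
  rw [← sub_eq_zero, ← inner_self_eq_zero (𝕜 := 𝕜)]
  simp only [inner_sub_left, inner_sub_right, inner_smul_left, inner_smul_right, hT]
  ring

def LinearIsometry.ofInnerMapMap (T : E → F) (hT : ∀ x y, ⟪T x, T y⟫_𝕜 = ⟪x, y⟫_𝕜) :
    E →ₗᵢ[𝕜] F :=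
  LinearMap.isometryOfInner
    { toFun := T
      map_add' := map_add_of_inner_map_map hT
      map_smul' := map_smul_of_inner_map_map hT } hT

end InnerPreserving

namespace Network

variable {V : Type*} (N : Network V)

/-- The edge gradient of `u`, weighted by `√(c/2)` so that `∑' p, ‖grad u p‖ ^ 2` is the energy
of `u`. -/
noncomputable def grad (u : V → ℂ) (p : V × V) : ℂ :=
  if N.adj p.1 p.2 then (Real.sqrt (N.c p.1 p.2 / 2) : ℂ) * (u p.1 - u p.2) else 0

theorem inner_grad_apply (u v : V → ℂ) (p : V × V) :
    ⟪N.grad u p, N.grad v p⟫_ℂ = (1 / 2) * if N.adj p.1 p.2 then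
      (N.c p.1 p.2 : ℂ) * conj (u p.1 - u p.2) * (v p.1 - v p.2) else 0 := by
  unfold grad
  split_ifs with h
  · have hc : (Real.sqrt (N.c p.1 p.2 / 2) : ℂ) ^ 2 = N.c p.1 p.2 / 2 := by
      exact_mod_cast Real.sq_sqrt (div_nonneg (N.c_pos _ _ h).le zero_le_two)
    rw [RCLike.inner_apply, map_mul, Complex.conj_ofReal]
    linear_combination (conj (u p.1 - u p.2) * (v p.1 - v p.2)) * hc
  · simp

theorem norm_grad_apply_sq (u : V → ℂ) (p : V × V) :
    ‖N.grad u p‖ ^ 2 =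
      (1 / 2) * if N.adj p.1 p.2 then N.c p.1 p.2 * ‖u p.1 - u p.2‖ ^ 2 else 0 := by
  unfold grad
  split_ifs with h
  · rw [norm_mul, Complex.norm_real, Real.norm_eq_abs, mul_pow, sq_abs,
      Real.sq_sqrt (div_nonneg (N.c_pos _ _ h).le zero_le_two)]
    ring
  · simp

theorem memℓp_grad {u : V → ℂ} (hu : N.energySummable u) : Memℓp (N.grad u) 2 := by
  refine memℓp_gen ?_
  simp only [ENNReal.toReal_ofNat, Real.rpow_two, norm_grad_apply_sq]
  exact hu.mul_left _

theorem inner_grad_eq_energyInner {u v : V → ℂ} (hu : Memℓp (N.grad u) 2)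
    (hv : Memℓp (N.grad v) 2) :
    ⟪(⟨N.grad u, hu⟩ : lp (fun _ : V × V ↦ ℂ) 2), ⟨N.grad v, hv⟩⟫_ℂ = N.energyInner u v := by
  rw [lp.inner_eq_tsum]
  simp only [inner_grad_apply, tsum_mul_left]
  rfl

theorem energyInner_self (u : V → ℂ) : N.energyInner u u = N.energy u := by
  unfold energyInner energy
  push_cast
  congr 2 with p
  split_ifs
  · rw [mul_assoc, Complex.conj_mul']
    push_cast
    rfl
  · simp

end Network

namespace EnergySpace

variable {V : Type*} {N : Network V} {H : Type*} [NormedAddCommGroup H] [InnerProductSpace ℂ H]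
  [CompleteSpace H] (S : EnergySpace N H)

theorem eq_zero_of_rep_sub_eq_zero {f : H} (hf : ∀ a b, S.rep f a - S.rep f b = 0) : f = 0 := by
  rw [← inner_self_eq_zero (𝕜 := ℂ), S.inner_eq]
  simp [Network.energyInner, hf]

theorem rep_zero_sub (a b : V) : S.rep 0 a - S.rep 0 b = 0 := by
  obtain ⟨f, hf⟩ := S.surj 0 (by simp [Network.energySummable, summable_zero])
  have hf0 : f = 0 := S.eq_zero_of_rep_sub_eq_zero fun a b ↦ by simpa using hf a b
  simpa [hf0] using hf a b

theorem energySummable_rep (f : H) : N.energySummable (S.rep f) := by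
  by_contra h
  -- a divergent energy sum has junk value `0`, which forces `‖f‖ = 0`
  have hf : f = 0 := by
    unfold Network.energySummable at h
    rw [← inner_self_eq_zero (𝕜 := ℂ), S.inner_eq, N.energyInner_self, Network.energy,
      tsum_eq_zero_of_not_summable h]
    simp
  subst hf
  exact h (by simp [Network.energySummable, S.rep_zero_sub, summable_zero])

noncomputable def gradIsometry : H →ₗᵢ[ℂ] lp (fun _ : V × V ↦ ℂ) 2 :=
  LinearIsometry.ofInnerMapMap (fun f ↦ ⟨N.grad (S.rep f), N.memℓp_grad (S.energySummable_rep f)⟩)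
    fun f g ↦ by rw [N.inner_grad_eq_energyInner, S.inner_eq]

theorem exists_strongDual_eq_rep_sub_of_adj {a b : V} (hab : N.adj a b) :
    ∃ φ : StrongDual ℂ H, ∀ f, φ f = S.rep f a - S.rep f b := by
  have hs : (Real.sqrt (N.c a b / 2) : ℂ) ≠ 0 := by
    exact_mod_cast (Real.sqrt_pos.2 (half_pos (N.c_pos a b hab))).ne'
  refine ⟨(Real.sqrt (N.c a b / 2) : ℂ)⁻¹ • (lp.evalCLM ℂ (fun _ : V × V ↦ ℂ) 2 (a, b)).comp
    S.gradIsometry.toContinuousLinearMap, fun f ↦ ?_⟩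
  show (Real.sqrt (N.c a b / 2) : ℂ)⁻¹ * N.grad (S.rep f) (a, b) = _
  rw [Network.grad, if_pos hab, inv_mul_cancel_left₀ hs]

theorem exists_strongDual_eq_rep_sub (a b : V) :
    ∃ φ : StrongDual ℂ H, ∀ f, φ f = S.rep f a - S.rep f b := by
  induction N.conn a b with
  | refl => exact ⟨0, fun f ↦ by simp⟩
  | tail _ hbc ih =>
    obtain ⟨φ, hφ⟩ := ih
    obtain ⟨ψ, hψ⟩ := S.exists_strongDual_eq_rep_sub_of_adj hbc
    exact ⟨φ + ψ, fun f ↦ by simp [hφ, hψ]⟩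

end EnergySpace

theorem dipole_exists_unique_general
    {V : Type*} (N : Network V)
    {H : Type*} [NormedAddCommGroup H] [InnerProductSpace ℂ H] [CompleteSpace H]
    (S : EnergySpace N H) (x y : V) :
    ∃! v : H, ∀ u : H, ⟪v, u⟫_ℂ = S.rep u x - S.rep u y := by
  obtain ⟨φ, hφ⟩ := S.exists_strongDual_eq_rep_sub x y
  refine ⟨(InnerProductSpace.toDual ℂ H).symm φ, fun u ↦ ?_,
    fun v hv ↦ ext_inner_right ℂ fun u ↦ ?_⟩
  · rw [InnerProductSpace.toDual_symm_apply, hφ]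
  · rw [hv, InnerProductSpace.toDual_symm_apply, hφ]

/-- In a connected network, for every pair of vertices `x, y` there is a
unique dipole vector `v_{xy}` in the energy Hilbert space with
`⟨v_{xy}, u⟩ = u(x) - u(y)` for all `u ∈ H_E`. -/
theorem dipole_exists_unique
    {V : Type*} [Countable V] (N : Network V)
    {H : Type*} [NormedAddCommGroup H] [InnerProductSpace ℂ H] [CompleteSpace H]
    (S : EnergySpace N H) (x y : V) :
    ∃! v : H, ∀ u : H, ⟪v, u⟫_ℂ = S.rep u x - S.rep u y :=
  dipole_exists_unique_general N S x y
end

section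
/- Every u in the energy Hilbert space has the norm-convergent expansion u = Σ_{(xy)∈E^{ori}} I(u)_{xy} · v_{xy}, where I(u)_{xy} := c_{xy}(u(x) − u(y)) is the current through the edge (x,y). -/
open scoped InnerProductSpace ComplexConjugate

namespace Network

variable {V : Type*} (N : Network V)

attribute [local instance] Classical.propDecidable

end Network

attribute [local instance] Classical.propDecidable

/-! The energy identity says that the vectors `√c_e • v_e` form a Parseval frame of `H`: the
analysis map `A f = (⟪√c_e • v_e, f⟫)_e` is a linear isometry `H → ℓ²(E^{ori})`. Hence `A† A = 1`,
and `A†` sends the `e`-th unit vector to `√c_e • v_e`, so applying `A†` to the expansion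
`A f = Σ_e (A f)_e δ_e` in `ℓ²` gives `f = Σ_e c_e ⟪v_e, f⟫ v_e = Σ_e I(f)_e v_e`. -/

def IsParsevalFrame (𝕜 : Type*) {ι E : Type*} [RCLike 𝕜] [NormedAddCommGroup E]
    [InnerProductSpace 𝕜 E] (u : ι → E) : Prop :=
  ∀ f : E, ‖f‖ ^ 2 = ∑' i, ‖⟪u i, f⟫_𝕜‖ ^ 2

namespace IsParsevalFrame

variable {ι 𝕜 E : Type*} [RCLike 𝕜] [NormedAddCommGroup E] [InnerProductSpace 𝕜 E] {u : ι → E}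

theorem summable (hu : IsParsevalFrame 𝕜 u) (f : E) : Summable fun i => ‖⟪u i, f⟫_𝕜‖ ^ 2 := by
  by_cases hf : f = 0
  · simp [hf]
  -- a divergent `tsum` is `0`, which would force `‖f‖ = 0`
  by_contra hns
  have : ‖f‖ ^ 2 = 0 := by rw [hu f, tsum_eq_zero_of_not_summable hns]
  exact hf (by simpa using this)

theorem memℓp (hu : IsParsevalFrame 𝕜 u) (f : E) : Memℓp (fun i => ⟪u i, f⟫_𝕜) 2 :=
  (memℓp_gen_iff (by norm_num)).2 (by simpa using hu.summable f)

noncomputable def analysis (hu : IsParsevalFrame 𝕜 u) : E →ₗᵢ[𝕜] lp (fun _ : ι => 𝕜) 2 where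
  toFun f := ⟨fun i => ⟪u i, f⟫_𝕜, hu.memℓp f⟩
  map_add' f g := by ext i; exact inner_add_right _ _ _
  map_smul' a f := by ext i; exact inner_smul_right _ _ _
  norm_map' f := by
    have h := lp.norm_rpow_eq_tsum (p := 2) (by norm_num) ⟨fun i => ⟪u i, f⟫_𝕜, hu.memℓp f⟩
    rw [← sq_eq_sq₀ (norm_nonneg _) (norm_nonneg _), hu f]
    simpa using h

@[simp]
theorem analysis_apply (hu : IsParsevalFrame 𝕜 u) (f : E) (i : ι) :
    hu.analysis f i = ⟪u i, f⟫_𝕜 :=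
  rfl

variable [CompleteSpace E]

theorem adjoint_analysis_single (hu : IsParsevalFrame 𝕜 u) [DecidableEq ι] (i : ι) (a : 𝕜) :
    hu.analysis.toContinuousLinearMap.adjoint (lp.single 2 i a) = a • u i := by
  refine ext_inner_right 𝕜 fun f => ?_
  rw [ContinuousLinearMap.adjoint_inner_left, lp.inner_single_left, inner_smul_left]
  simp [mul_comm]

theorem hasSum_inner_smul (hu : IsParsevalFrame 𝕜 u) (f : E) :
    HasSum (fun i => ⟪u i, f⟫_𝕜 • u i) f := by
  classical
  let A := hu.analysis.toContinuousLinearMap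
  have h := (lp.hasSum_single (by norm_num) (A f)).mapL A.adjoint
  rw [← ContinuousLinearMap.comp_apply, hu.analysis.adjoint_comp_self] at h
  simpa [A, hu.adjoint_analysis_single] using h

end IsParsevalFrame

section Weighted

variable {ι 𝕜 E : Type*} [RCLike 𝕜] [NormedAddCommGroup E] [InnerProductSpace 𝕜 E]
  {w : ι → ℝ} {v : ι → E}

theorem isParsevalFrame_sqrt_smul (hw : ∀ i, 0 ≤ w i)
    (h : ∀ f : E, ‖f‖ ^ 2 = ∑' i, w i * ‖⟪v i, f⟫_𝕜‖ ^ 2) :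
    IsParsevalFrame 𝕜 fun i => ((√(w i) : ℝ) : 𝕜) • v i := by
  intro f
  rw [h f]
  congr! 2 with i
  rw [inner_smul_left, norm_mul, RCLike.norm_conj, RCLike.norm_ofReal, mul_pow, sq_abs,
    Real.sq_sqrt (hw i)]

theorem hasSum_weighted_inner_smul [CompleteSpace E] (hw : ∀ i, 0 ≤ w i)
    (h : ∀ f : E, ‖f‖ ^ 2 = ∑' i, w i * ‖⟪v i, f⟫_𝕜‖ ^ 2) (f : E) :
    HasSum (fun i => ((w i : 𝕜) * ⟪v i, f⟫_𝕜) • v i) f := by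
  convert (isParsevalFrame_sqrt_smul hw h).hasSum_inner_smul f using 2 with i
  rw [inner_smul_left, smul_smul, RCLike.conj_ofReal, mul_right_comm, ← RCLike.ofReal_mul,
    Real.mul_self_sqrt (hw i)]

end Weighted

theorem current_expansion_general
    {V : Type*} (N : Network V)
    (ori : Set (V × V))
    (hcover : ∀ p : V × V, N.adj p.1 p.2 ↔ (p ∈ ori ∨ p.swap ∈ ori))
    {H : Type*} [NormedAddCommGroup H] [InnerProductSpace ℂ H] [CompleteSpace H]
    (rep : H → V → ℂ)
    (hnorm : ∀ f : H, ‖f‖ ^ 2 =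
      ∑' e : ori, N.c (e : V × V).1 (e : V × V).2 *
        ‖rep f (e : V × V).1 - rep f (e : V × V).2‖ ^ 2)
    (v : ori → H)
    (hv : ∀ e : ori, ∀ u : H,
      ⟪v e, u⟫_ℂ = rep u (e : V × V).1 - rep u (e : V × V).2)
 :
    ∀ u : H, HasSum
      (fun e : ori =>
        ((N.c (e : V × V).1 (e : V × V).2 : ℂ) *
          (rep u (e : V × V).1 - rep u (e : V × V).2)) • v e) u := by
  have hc (e : ori) : 0 ≤ N.c (e : V × V).1 (e : V × V).2 :=
    (N.c_pos _ _ ((hcover e).2 (Or.inl e.2))).le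
  have hparseval (f : H) : ‖f‖ ^ 2 =
      ∑' e : ori, N.c (e : V × V).1 (e : V × V).2 * ‖⟪v e, f⟫_ℂ‖ ^ 2 := by
    simp only [hv, hnorm f]
  intro u
  simpa only [hv, RCLike.ofReal_eq_complex_ofReal] using
    hasSum_weighted_inner_smul hc hparseval u

/-- Every `u ∈ H_E` has the norm-convergent current expansion
`u = Σ_{(xy)∈E^{ori}} I(u)_{xy} v_{xy}` with `I(u)_{xy} = c_{xy}(u(x) - u(y))`. -/
theorem current_expansion
    {V : Type*} [Countable V] (N : Network V)
    (ori : Set (V × V))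
    (hcover : ∀ p : V × V, N.adj p.1 p.2 ↔ (p ∈ ori ∨ p.swap ∈ ori))
    (honce : ∀ p : V × V, p ∈ ori → p.swap ∉ ori)
    {H : Type*} [NormedAddCommGroup H] [InnerProductSpace ℂ H] [CompleteSpace H]
    (rep : H → V → ℂ)
    (hnorm : ∀ f : H, ‖f‖ ^ 2 =
      ∑' e : ori, N.c (e : V × V).1 (e : V × V).2 *
        ‖rep f (e : V × V).1 - rep f (e : V × V).2‖ ^ 2)
    (v : ori → H)
    (hv : ∀ e : ori, ∀ u : H,
      ⟪v e, u⟫_ℂ = rep u (e : V × V).1 - rep u (e : V × V).2)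
 :
    ∀ u : H, HasSum
      (fun e : ori =>
        ((N.c (e : V × V).1 (e : V × V).2 : ℂ) *
          (rep u (e : V × V).1 - rep u (e : V × V).2)) • v e) u :=
  current_expansion_general N ori hcover rep hnorm v hv
end

section
/- Let dist_c(x,y) := sup{ 1/‖u‖²_{H_E} : u ∈ H_E, u(x) = 1, u(y) = 0 } be the resistance metric on a connected network. Then dist_c(x,y) = ‖v_{xy}‖²_{H_E}, where v_{xy} is the dipole vector satisfying ⟨v_{xy},u⟩_{H_E} = u(x)−u(y). -/
open scoped InnerProductSpace ComplexConjugate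

namespace Network

variable {V : Type*} (N : Network V)

attribute [local instance] Classical.propDecidable

end Network

attribute [local instance] Classical.propDecidable

/-!
The dipole `v` represents the functional `u ↦ u(x) - u(y)`, so the admissible `u` are exactly
those with `⟪v, u⟫ = 1`. Cauchy–Schwarz gives `1 ≤ ‖v‖ ‖u‖` for each of them, and equality is
attained by `u = v / ‖v‖²`. If `v = 0` there is no admissible `u`, and both sides are `0`.
-/

section InnerEqOne

variable {𝕜 E : Type*} [RCLike 𝕜] [NormedAddCommGroup E] [InnerProductSpace 𝕜 E]

theorem one_div_norm_sq_le_of_inner_eq_one {v u : E} (h : ⟪v, u⟫_𝕜 = 1) :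
    1 / ‖u‖ ^ 2 ≤ ‖v‖ ^ 2 := by
  have hcs : 1 ≤ ‖v‖ * ‖u‖ := by simpa [h] using norm_inner_le_norm (𝕜 := 𝕜) v u
  have hu : 0 < ‖u‖ := by
    by_contra! hu
    nlinarith [norm_nonneg v, norm_nonneg u]
  rw [div_le_iff₀ (by positivity)]
  nlinarith

theorem inner_inv_norm_sq_smul_self {v : E} (hv : v ≠ 0) :
    ⟪v, ((‖v‖ ^ 2)⁻¹ : 𝕜) • v⟫_𝕜 = 1 := by
  rw [inner_smul_right, inner_self_eq_norm_sq_to_K]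
  exact inv_mul_cancel₀ (pow_ne_zero 2 (RCLike.ofReal_ne_zero.mpr (norm_ne_zero_iff.mpr hv)))

theorem norm_inv_norm_sq_smul_self (v : E) : ‖((‖v‖ ^ 2)⁻¹ : 𝕜) • v‖ = ‖v‖⁻¹ := by
  rcases eq_or_ne v 0 with rfl | hv
  · simp
  have : ‖v‖ ≠ 0 := norm_ne_zero_iff.mpr hv
  rw [norm_smul, norm_inv, norm_pow, RCLike.norm_ofReal, abs_norm]
  field_simp

theorem sSup_one_div_norm_sq_of_inner_eq_one (v : E) :
    sSup {r : ℝ | ∃ u : E, ⟪v, u⟫_𝕜 = 1 ∧ r = 1 / ‖u‖ ^ 2} = ‖v‖ ^ 2 := by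
  rcases eq_or_ne v 0 with rfl | hv
  · simp
  refine IsGreatest.csSup_eq ⟨⟨((‖v‖ ^ 2)⁻¹ : 𝕜) • v, inner_inv_norm_sq_smul_self hv, ?_⟩, ?_⟩
  · rw [norm_inv_norm_sq_smul_self, inv_pow, one_div, inv_inv]
  rintro r ⟨u, hu, rfl⟩
  exact one_div_norm_sq_le_of_inner_eq_one hu

end InnerEqOne

theorem resistance_metric_eq_dipole_norm_sq_general
    {V : Type*} (N : Network V)
    {H : Type*} [NormedAddCommGroup H] [InnerProductSpace ℂ H] [CompleteSpace H]
    (S : EnergySpace N H) (x y : V) (v : H)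
    (hv : ∀ u : H, ⟪v, u⟫_ℂ = S.rep u x - S.rep u y) :
    sSup {r : ℝ | ∃ u : H, S.rep u x - S.rep u y = 1 ∧ r = 1 / ‖u‖ ^ 2} = ‖v‖ ^ 2 := by
  simp_rw [← hv]
  exact sSup_one_div_norm_sq_of_inner_eq_one v

/-- The resistance metric
`dist_c(x,y) = sup{ 1/‖u‖² : u ∈ H_E, u(x) = 1, u(y) = 0 }` equals `‖v_{xy}‖²_{H_E}`,
the squared energy norm of the dipole. -/
theorem resistance_metric_eq_dipole_norm_sq
    {V : Type*} [Countable V] (N : Network V)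
    {H : Type*} [NormedAddCommGroup H] [InnerProductSpace ℂ H] [CompleteSpace H]
    (S : EnergySpace N H) (x y : V) (v : H)
    (hv : ∀ u : H, ⟪v, u⟫_ℂ = S.rep u x - S.rep u y) :
    sSup {r : ℝ | ∃ u : H, S.rep u x - S.rep u y = 1 ∧ r = 1 / ‖u‖ ^ 2} = ‖v‖ ^ 2 :=
  resistance_metric_eq_dipole_norm_sq_general N S x y v hv
end

section
/- The orthogonal complement in the energy Hilbert space of the family {δ_x : x ∈ V} equals the space of harmonic functions: {u ∈ H_E : ⟨δ_x, u⟩_{H_E} = 0 for all x ∈ V} = {u ∈ H_E : Δu = 0}. -/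
open scoped InnerProductSpace ComplexConjugate

namespace Network

variable {V : Type*} (N : Network V)

attribute [local instance] Classical.propDecidable

end Network

attribute [local instance] Classical.propDecidable

/-!
Since `δ_x` changes only across the edges at `x`, where it jumps by `±1`, the energy sum
`⟨δ_x, u⟩` collapses to the edges at `x`; each such edge is counted twice, once in each
orientation, which cancels the factor `1/2` and leaves `Σ_{y∼x} c_{xy} (u(x) - u(y)) = Δu(x)`.
-/

namespace Network

variable {V : Type*} (N : Network V)

lemma mem_nbrs {x y : V} : y ∈ N.nbrs x ↔ N.adj x y :=
  Set.Finite.mem_toFinset _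

lemma lap_eq_tsum (v : V → ℂ) (x : V) :
    N.lap v x = ∑' y, if N.adj x y then (N.c x y : ℂ) * (v x - v y) else 0 := by
  rw [tsum_eq_sum (s := N.nbrs x) fun y hy => if_neg (mt N.mem_nbrs.2 hy), lap]
  exact Finset.sum_congr rfl fun y hy => (if_pos (N.mem_nbrs.1 hy)).symm

lemma energyInner_congr_left {f g : V → ℂ} (hfg : ∀ a b, f a - f b = g a - g b)
    (v : V → ℂ) : N.energyInner f v = N.energyInner g v := by
  simp only [energyInner, hfg]

lemma energyInner_indicator_left (v : V → ℂ) (x : V) :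
    N.energyInner (fun a => if a = x then 1 else 0) v = N.lap v x := by
  set A : V × V → ℂ := fun p =>
    if p.1 = x ∧ N.adj p.1 p.2 then (N.c p.1 p.2 : ℂ) * (v p.1 - v p.2) else 0 with hA_def
  have hA : Summable A := by
    refine summable_of_ne_finset_zero (s := (N.nbrs x).image (Prod.mk x)) fun p hp => ?_
    refine if_neg fun ⟨h1, h2⟩ => hp (Finset.mem_image.2 ⟨p.2, N.mem_nbrs.2 (h1 ▸ h2), ?_⟩)
    rw [← h1]
  have hsplit : ∀ p : V × V, (if N.adj p.1 p.2 then (N.c p.1 p.2 : ℂ) *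
      conj ((if p.1 = x then 1 else 0) - (if p.2 = x then 1 else 0)) * (v p.1 - v p.2)
      else 0) = A p + A p.swap := by
    rintro ⟨a, b⟩
    by_cases hab : N.adj a b
    · have hba := N.symm a b hab
      by_cases ha : a = x <;> by_cases hb : b = x
      · exact absurd (ha.trans hb.symm ▸ hab) (N.loopless b)
      · subst ha
        simp [hA_def, hab, hba, hb]
      · subst hb
        simp [hA_def, hab, hba, ha, N.c_symm b a]
        ring
      · simp [hA_def, ha, hb]
    · simp [hA_def, hab, mt (N.symm b a) hab]
  have hA_swap : Summable fun p : V × V => A p.swap := (Equiv.prodComm V V).summable_iff.2 hA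
  have hswap : ∑' p : V × V, A p.swap = ∑' p, A p := (Equiv.prodComm V V).tsum_eq A
  have hrow : ∑' p, A p = N.lap v x := by
    rw [← (Prod.mk_right_injective x).tsum_eq, lap_eq_tsum]
    · simp [hA_def]
    · intro p hp
      exact ⟨p.2, Prod.ext (of_not_not fun h => hp (if_neg (h ∘ And.left))).symm rfl⟩
  rw [energyInner, tsum_congr hsplit, hA.tsum_add hA_swap, hswap, hrow]
  ring

end Network

lemma EnergySpace.inner_eq_lap {V : Type*} {N : Network V}
    {H : Type*} [NormedAddCommGroup H] [InnerProductSpace ℂ H] [CompleteSpace H]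
    (S : EnergySpace N H) {x : V} {δ : H}
    (hδ : ∀ a b : V, S.rep δ a - S.rep δ b =
      (if a = x then (1 : ℂ) else 0) - (if b = x then (1 : ℂ) else 0))
    (u : H) : ⟪δ, u⟫_ℂ = N.lap (S.rep u) x := by
  rw [S.inner_eq, N.energyInner_congr_left hδ, N.energyInner_indicator_left]

theorem delta_orthocomplement_eq_harmonic_general
    {V : Type*} (N : Network V)
    {H : Type*} [NormedAddCommGroup H] [InnerProductSpace ℂ H] [CompleteSpace H]
    (S : EnergySpace N H) (d : V → H)
    (hd : ∀ x : V, ∀ a b : V, S.rep (d x) a - S.rep (d x) b =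
      (if a = x then (1 : ℂ) else 0) - (if b = x then (1 : ℂ) else 0)) :
    {u : H | ∀ x : V, ⟪d x, u⟫_ℂ = 0} =
      {u : H | ∀ z : V, N.lap (S.rep u) z = 0} :=
  Set.ext fun u => forall_congr' fun x => by rw [S.inner_eq_lap (hd x)]

/-- The orthogonal complement in `H_E` of the family
`{δ_x : x ∈ V}` is the space of harmonic functions:
`{u : ⟨δ_x, u⟩ = 0 ∀x} = {u : Δu = 0}`. -/
theorem delta_orthocomplement_eq_harmonic
    {V : Type*} [Countable V] (N : Network V)
    {H : Type*} [NormedAddCommGroup H] [InnerProductSpace ℂ H] [CompleteSpace H]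
    (S : EnergySpace N H) (d : V → H)
    (hd : ∀ x : V, ∀ a b : V, S.rep (d x) a - S.rep (d x) b =
      (if a = x then (1 : ℂ) else 0) - (if b = x then (1 : ℂ) else 0)) :
    {u : H | ∀ x : V, ⟪d x, u⟫_ℂ = 0} =
      {u : H | ∀ z : V, N.lap (S.rep u) z = 0} :=
  delta_orthocomplement_eq_harmonic_general N S d hd
end

section
/- Let φ = Σ_{x∈V'} ξ_x v_x be a finite linear combination of dipoles with coefficients satisfying Σ_x ξ_x = 0. Then the quadratic form of the graph Laplacian satisfies ⟨φ, Δφ⟩_{H_E} = Σ_{x∈V'} |ξ_x|². -/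
open scoped InnerProductSpace ComplexConjugate

namespace Network

variable {V : Type*} (N : Network V)

attribute [local instance] Classical.propDecidable

end Network

attribute [local instance] Classical.propDecidable

/-! Pairing a dipole with a difference of Dirac masses gives `⟪v y, δ x - δ o⟫ = [y = x] + 1`
for `x, y ≠ o`, so `⟪v y, Δφ⟫ = ξ y + ∑ ξ = ξ y`; summing against `conj (ξ y)` leaves `∑ |ξ|²`. -/

theorem inner_dipole_dirac_sub_dirac {V H : Type*} [DecidableEq V] [SeminormedAddCommGroup H]
    [InnerProductSpace ℂ H] (rep : H → V → ℂ) {o : V} {v d : V → H}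
    (hv : ∀ x : V, ∀ u : H, ⟪v x, u⟫_ℂ = rep u x - rep u o)
    (hd : ∀ z : V, ∀ a b : V, rep (d z) a - rep (d z) b =
      (if a = z then (1 : ℂ) else 0) - (if b = z then (1 : ℂ) else 0))
    {x y : V} (hx : x ≠ o) (hy : y ≠ o) :
    ⟪v y, d x - d o⟫_ℂ = (if y = x then 1 else 0) + 1 := by
  rw [inner_sub_right, hv, hv, hd, hd]
  simp [hx.symm, hy]

theorem inner_dipole_sum_smul_dirac_sub_dirac {V H : Type*} [DecidableEq V]
    [SeminormedAddCommGroup H] [InnerProductSpace ℂ H] (rep : H → V → ℂ) {o : V} {v d : V → H}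
    (hv : ∀ x : V, ∀ u : H, ⟪v x, u⟫_ℂ = rep u x - rep u o)
    (hd : ∀ z : V, ∀ a b : V, rep (d z) a - rep (d z) b =
      (if a = z then (1 : ℂ) else 0) - (if b = z then (1 : ℂ) else 0))
    {s : Finset V} (hs : ∀ x ∈ s, x ≠ o) (ξ : V → ℂ) {y : V} (hy : y ≠ o) :
    ⟪v y, ∑ x ∈ s, ξ x • (d x - d o)⟫_ℂ = (if y ∈ s then ξ y else 0) + ∑ x ∈ s, ξ x := by
  calc ⟪v y, ∑ x ∈ s, ξ x • (d x - d o)⟫_ℂ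
      = ∑ x ∈ s, ((if y = x then ξ x else 0) + ξ x) := by
        simp only [inner_sum, inner_smul_right]
        refine Finset.sum_congr rfl fun x hx => ?_
        rw [inner_dipole_dirac_sub_dirac rep hv hd (hs x hx) hy]
        split_ifs <;> ring
    _ = (if y ∈ s then ξ y else 0) + ∑ x ∈ s, ξ x := by
        rw [Finset.sum_add_distrib, Finset.sum_ite_eq]

theorem laplacian_quadratic_form_on_dipoles_general
    {V : Type*} (N : Network V)
    {H : Type*} [NormedAddCommGroup H] [InnerProductSpace ℂ H] [CompleteSpace H]
    (S : EnergySpace N H) (o : V) (v d : V → H)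
    (hv : ∀ x : V, ∀ u : H, ⟪v x, u⟫_ℂ = S.rep u x - S.rep u o)
    (hd : ∀ z : V, ∀ a b : V, S.rep (d z) a - S.rep (d z) b =
      (if a = z then (1 : ℂ) else 0) - (if b = z then (1 : ℂ) else 0))
    (s : Finset V) (hs : ∀ x ∈ s, x ≠ o)
    (ξ : V → ℂ) (hξ : ∑ x ∈ s, ξ x = 0) :
    ⟪∑ x ∈ s, ξ x • v x, ∑ x ∈ s, ξ x • (d x - d o)⟫_ℂ =
      ∑ x ∈ s, (‖ξ x‖ ^ 2 : ℂ) := by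
  rw [sum_inner]
  refine Finset.sum_congr rfl fun y hy => ?_
  rw [inner_smul_left, inner_dipole_sum_smul_dirac_sub_dirac S.rep hv hd hs ξ (hs y hy), if_pos hy,
    hξ, add_zero, RCLike.conj_mul]
  norm_cast

/-- For `φ = Σ_{x∈V'} ξ_x v_x` with `Σ ξ_x = 0`, the quadratic form
of the Laplacian satisfies `⟨φ, Δφ⟩_{H_E} = Σ |ξ_x|²`, where `Δ v_x = δ_x - δ_o`. -/
theorem laplacian_quadratic_form_on_dipoles
    {V : Type*} [Countable V] (N : Network V)
    {H : Type*} [NormedAddCommGroup H] [InnerProductSpace ℂ H] [CompleteSpace H]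
    (S : EnergySpace N H) (o : V) (v d : V → H)
    (hv : ∀ x : V, ∀ u : H, ⟪v x, u⟫_ℂ = S.rep u x - S.rep u o)
    (hd : ∀ z : V, ∀ a b : V, S.rep (d z) a - S.rep (d z) b =
      (if a = z then (1 : ℂ) else 0) - (if b = z then (1 : ℂ) else 0))
    (s : Finset V) (hs : ∀ x ∈ s, x ≠ o)
    (ξ : V → ℂ) (hξ : ∑ x ∈ s, ξ x = 0) :
    ⟪∑ x ∈ s, ξ x • v x, ∑ x ∈ s, ξ x • (d x - d o)⟫_ℂ =
      ∑ x ∈ s, (‖ξ x‖ ^ 2 : ℂ) :=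
  laplacian_quadratic_form_on_dipoles_general N S o v d hv hd s hs ξ hξ
end

section
/- The graph Laplacian Δ restricted to the dense domain D_E = span{v_x : x ∈ V'} in the energy Hilbert space is Hermitian (symmetric) and nonnegative: ⟨Δu, v⟩_{H_E} = ⟨u, Δv⟩_{H_E} and ⟨u, Δu⟩_{H_E} ≥ 0 for all u, v ∈ D_E. -/
open scoped InnerProductSpace ComplexConjugate

namespace Network

variable {V : Type*} (N : Network V)

attribute [local instance] Classical.propDecidable

end Network

attribute [local instance] Classical.propDecidable

open Finset

/- With `d z` representing `δ_z`, so that `d y - d o = Δ v_y`, the reproducing property of the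
dipoles gives `⟪v_x, δ_y - δ_o⟫ = [x = y] + c_x` with `c_x` independent of `y`. On combinations
`Σ η_y (δ_y - δ_o)` with `Σ η_y = 0` the constant drops out, hence
`⟪Σ ξ_x v_x, Σ η_y Δv_y⟫ = Σ conj ξ_x η_x`, a Hermitian and positive form. -/

theorem inner_sum_smul_eq_ite_of_inner_eq_ite_add {𝕜 E ι : Type*} [RCLike 𝕜] [DecidableEq ι]
    [NormedAddCommGroup E] [InnerProductSpace 𝕜 E] {u : E} {w : ι → E} {x : ι} {c : 𝕜}
    {a : Finset ι} {ζ : ι → 𝕜} (hζ : ∑ y ∈ a, ζ y = 0)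
    (h : ∀ y ∈ a, ⟪u, w y⟫_𝕜 = (if x = y then 1 else 0) + c) :
    ⟪u, ∑ y ∈ a, ζ y • w y⟫_𝕜 = if x ∈ a then ζ x else 0 := by
  simp only [inner_sum, inner_smul_right]
  rw [sum_congr rfl fun y hy => congrArg (ζ y * ·) (h y hy)]
  simp only [mul_add, sum_add_distrib, ← sum_mul, hζ, zero_mul, add_zero, mul_ite, mul_one,
    mul_zero, sum_ite_eq]

section Dipoles

variable {V H : Type*} {N : Network V} [NormedAddCommGroup H] [InnerProductSpace ℂ H]
  [CompleteSpace H] {S : EnergySpace N H} {o : V} {v d : V → H}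

theorem inner_dipole_delta_sub
    (hv : ∀ x : V, ∀ u : H, ⟪v x, u⟫_ℂ = S.rep u x - S.rep u o)
    (hd : ∀ z : V, ∀ a b : V, S.rep (d z) a - S.rep (d z) b =
      (if a = z then (1 : ℂ) else 0) - (if b = z then (1 : ℂ) else 0))
    (x : V) {z : V} (hz : z ≠ o) :
    ⟪v x, d z - d o⟫_ℂ = (if x = z then 1 else 0) + (1 - if x = o then 1 else 0) := by
  rw [inner_sub_right, hv, hv, hd z x o, hd o x o, if_neg hz.symm, if_pos rfl]
  ring

theorem inner_sum_dipole_sum_delta_sub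
    (hv : ∀ x : V, ∀ u : H, ⟪v x, u⟫_ℂ = S.rep u x - S.rep u o)
    (hd : ∀ z : V, ∀ a b : V, S.rep (d z) a - S.rep (d z) b =
      (if a = z then (1 : ℂ) else 0) - (if b = z then (1 : ℂ) else 0))
    {s t : Finset V} (ht : ∀ y ∈ t, y ≠ o) (ξ : V → ℂ) {η : V → ℂ} (hη : ∑ y ∈ t, η y = 0) :
    ⟪∑ x ∈ s, ξ x • v x, ∑ y ∈ t, η y • (d y - d o)⟫_ℂ = ∑ x ∈ s ∩ t, conj (ξ x) * η x := by
  have hx : ∀ x, ⟪v x, ∑ y ∈ t, η y • (d y - d o)⟫_ℂ = if x ∈ t then η x else 0 := fun x =>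
    inner_sum_smul_eq_ite_of_inner_eq_ite_add hη fun y hy =>
      inner_dipole_delta_sub hv hd x (ht y hy)
  simp only [sum_inner, inner_smul_left, hx, mul_ite, mul_zero, sum_ite_mem]

end Dipoles

theorem laplacian_hermitian_nonneg_on_DE_general
    {V : Type*} (N : Network V)
    {H : Type*} [NormedAddCommGroup H] [InnerProductSpace ℂ H] [CompleteSpace H]
    (S : EnergySpace N H) (o : V) (v d : V → H)
    (hv : ∀ x : V, ∀ u : H, ⟪v x, u⟫_ℂ = S.rep u x - S.rep u o)
    (hd : ∀ z : V, ∀ a b : V, S.rep (d z) a - S.rep (d z) b =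
      (if a = z then (1 : ℂ) else 0) - (if b = z then (1 : ℂ) else 0))
    (s t : Finset V) (hs : ∀ x ∈ s, x ≠ o) (ht : ∀ x ∈ t, x ≠ o)
    (ξ η : V → ℂ) (hξ : ∑ x ∈ s, ξ x = 0) (hη : ∑ x ∈ t, η x = 0) :
    ⟪∑ x ∈ s, ξ x • (d x - d o), ∑ y ∈ t, η y • v y⟫_ℂ =
        ⟪∑ x ∈ s, ξ x • v x, ∑ y ∈ t, η y • (d y - d o)⟫_ℂ ∧
    0 ≤ (⟪∑ x ∈ s, ξ x • v x, ∑ x ∈ s, ξ x • (d x - d o)⟫_ℂ).re := by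
  constructor
  · rw [← inner_conj_symm, inner_sum_dipole_sum_delta_sub hv hd hs η hξ,
      inner_sum_dipole_sum_delta_sub hv hd ht ξ hη, map_sum, inter_comm]
    simp only [map_mul, Complex.conj_conj, mul_comm]
  · rw [inner_sum_dipole_sum_delta_sub hv hd hs ξ hξ, inter_self, Complex.re_sum]
    exact sum_nonneg fun x _ => by
      rw [← Complex.normSq_eq_conj_mul_self, Complex.ofReal_re]
      exact Complex.normSq_nonneg _

/-- The graph Laplacian on the dense domain
`D_E = span{v_x : x ∈ V'}` (where `Δ v_x = δ_x - δ_o`) is Hermitian and nonnegative: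
`⟨Δu, w⟩ = ⟨u, Δw⟩` and `⟨u, Δu⟩ ≥ 0`. -/
theorem laplacian_hermitian_nonneg_on_DE
    {V : Type*} [Countable V] (N : Network V)
    {H : Type*} [NormedAddCommGroup H] [InnerProductSpace ℂ H] [CompleteSpace H]
    (S : EnergySpace N H) (o : V) (v d : V → H)
    (hv : ∀ x : V, ∀ u : H, ⟪v x, u⟫_ℂ = S.rep u x - S.rep u o)
    (hd : ∀ z : V, ∀ a b : V, S.rep (d z) a - S.rep (d z) b =
      (if a = z then (1 : ℂ) else 0) - (if b = z then (1 : ℂ) else 0))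
    (s t : Finset V) (hs : ∀ x ∈ s, x ≠ o) (ht : ∀ x ∈ t, x ≠ o)
    (ξ η : V → ℂ) (hξ : ∑ x ∈ s, ξ x = 0) (hη : ∑ x ∈ t, η x = 0) :
    ⟪∑ x ∈ s, ξ x • (d x - d o), ∑ y ∈ t, η y • v y⟫_ℂ =
        ⟪∑ x ∈ s, ξ x • v x, ∑ y ∈ t, η y • (d y - d o)⟫_ℂ ∧
    0 ≤ (⟪∑ x ∈ s, ξ x • v x, ∑ x ∈ s, ξ x • (d x - d o)⟫_ℂ).re :=
  laplacian_hermitian_nonneg_on_DE_general N S o v d hv hd s t hs ht ξ η hξ hη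
end
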